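/- For every p ∈ 𝒫 and all bounded measurable f, g : Ω → ℝ, ∫_Ω f(σ(τ_⋆ω)) g(ω) dπ_p(ω) = ∫_Ω f(ω) g(τ_⋆^{−1}(σω)) dπ_p(ω). (Adjoint identity: the L²(π_p)-adjoint of the map f ↦ f∘(σ∘τ_⋆) is g ↦ g∘(τ_⋆^{−1}∘σ).) -/

import Mathlib

open MeasureTheory

noncomputable section

/-- The set `ℰ = {±e₁, …, ±e_d} ⊂ ℤ^d` of canonical unit vectors and their negatives. -/
def ArrowSet (d : ℕ) : Set (Fin d → ℤ) :=
  {v | ∃ i : Fin d, v = Pi.single i 1 ∨ v = Pi.single i (-1)}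

/-- `Ω = ℰ^{ℤ^d_⋆}`, where `ℤ^d_⋆ = ℤ^d ∪ {⋆}` is encoded as `Option (Fin d → ℤ)`
with `none = ⋆`; it carries the product σ-algebra. -/
abbrev Env (d : ℕ) := Option (Fin d → ℤ) → ArrowSet d

/-- The hand-shift `τ_⋆`: `(τ_⋆ω)(x) = ω(x + ω(⋆))` for `x ∈ ℤ^d`, `(τ_⋆ω)(⋆) = ω(⋆)`. -/
def tauStar {d : ℕ} (ω : Env d) : Env d := fun z =>
  match z with
  | none => ω none
  | some x => ω (some (x + (ω none).val))

/-- The inverse hand-shift `τ_⋆⁻¹`: `(τ_⋆⁻¹ω)(x) = ω(x − ω(⋆))`, `(τ_⋆⁻¹ω)(⋆) = ω(⋆)`. -/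
def tauStarInv {d : ℕ} (ω : Env d) : Env d := fun z =>
  match z with
  | none => ω none
  | some x => ω (some (x - (ω none).val))

/-- The swap `σ`: `(σω)(0) = ω(⋆)`, `(σω)(⋆) = ω(0)`, `(σω)(x) = ω(x)` otherwise. -/
def swapMap {d : ℕ} (ω : Env d) : Env d := fun z =>
  match z with
  | none => ω (some 0)
  | some x => if x = 0 then ω none else ω (some x)

/-- The arrow `+e_i` as an element of `ℰ`. -/
def arrowPos (d : ℕ) (i : Fin d) : ArrowSet d := ⟨Pi.single i 1, ⟨i, Or.inl rfl⟩⟩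

/-- The arrow `-e_i` as an element of `ℰ`. -/
def arrowNeg (d : ℕ) (i : Fin d) : ArrowSet d := ⟨Pi.single i (-1), ⟨i, Or.inr rfl⟩⟩

/-- The measure `μ_p` on `ℰ` with `μ_p(+e_i) = μ_p(−e_i) = p_i/2`. -/
def muP {d : ℕ} (p : Fin d → ℝ) : Measure (ArrowSet d) :=
  ∑ i : Fin d, ENNReal.ofReal (p i / 2) •
    (Measure.dirac (arrowPos d i) + Measure.dirac (arrowNeg d i))

/-- `π` is the product measure `⊗_{x ∈ ℤ^d_⋆} μ_p` on `Ω`: it assigns to every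
cylinder set the corresponding product of `μ_p`-measures. -/
def IsProductMeasure {d : ℕ} (p : Fin d → ℝ) (π : Measure (Env d)) : Prop :=
  ∀ (S : Finset (Option (Fin d → ℤ))) (A : Option (Fin d → ℤ) → Set (ArrowSet d)),
    (∀ z, MeasurableSet (A z)) →
    π {ω : Env d | ∀ z ∈ S, ω z ∈ A z} = ∏ z ∈ S, muP p (A z)


namespace AdjointAux

open Set

variable {d : ℕ}

lemma arrow_measurableSet (s : Set (ArrowSet d)) : MeasurableSet s :=
  s.to_countable.measurableSet

/-- Case-splitting on a countable measurable value. -/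
lemma measurable_cases {Ω γ : Type*} [MeasurableSpace Ω] [MeasurableSpace γ]
    {k : Ω → ArrowSet d} (hk : Measurable k) {F : ArrowSet d → Ω → γ}
    (hF : ∀ b, Measurable (F b)) : Measurable fun ω => F (k ω) ω := by
  intro t ht
  have : (fun ω => F (k ω) ω) ⁻¹' t = ⋃ b : ArrowSet d, (k ⁻¹' {b} ∩ (F b) ⁻¹' t) := by
    ext ω
    simp only [Set.mem_preimage, Set.mem_iUnion, Set.mem_inter_iff, Set.mem_singleton_iff]
    constructor
    · intro h; exact ⟨k ω, rfl, h⟩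
    · rintro ⟨b, rfl, h⟩; exact h
  rw [this]
  exact MeasurableSet.iUnion fun b =>
    (hk (arrow_measurableSet _)).inter (hF b ht)

lemma measurable_tauStar : Measurable (tauStar (d := d)) := by
  apply measurable_pi_lambda
  intro z
  match z with
  | none => exact measurable_pi_apply none
  | some x =>
    have hk : Measurable fun ω : Env d => ω none := measurable_pi_apply none
    have hF : ∀ b : ArrowSet d, Measurable fun ω : Env d => ω (some (x + b.val)) :=
      fun b => measurable_pi_apply _
    exact measurable_cases hk hF

lemma measurable_tauStarInv : Measurable (tauStarInv (d := d)) := by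
  apply measurable_pi_lambda
  intro z
  match z with
  | none => exact measurable_pi_apply none
  | some x =>
    have hk : Measurable fun ω : Env d => ω none := measurable_pi_apply none
    have hF : ∀ b : ArrowSet d, Measurable fun ω : Env d => ω (some (x - b.val)) :=
      fun b => measurable_pi_apply _
    exact measurable_cases hk hF

lemma measurable_swapMap : Measurable (swapMap (d := d)) := by
  apply measurable_pi_lambda
  intro z
  match z with
  | none => exact measurable_pi_apply (some 0)
  | some x =>
    by_cases hx : x = 0
    · simp only [swapMap, hx, if_true]
      exact measurable_pi_apply none
    · simp only [swapMap, hx, if_false]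
      exact measurable_pi_apply (some x)

/-- Cylinder sets. -/
def cyl (S : Finset (Option (Fin d → ℤ))) (A : Option (Fin d → ℤ) → Set (ArrowSet d)) :
    Set (Env d) := {ω : Env d | ∀ z ∈ S, ω z ∈ A z}

lemma cyl_measurableSet (S : Finset (Option (Fin d → ℤ)))
    (A : Option (Fin d → ℤ) → Set (ArrowSet d)) : MeasurableSet (cyl S A) := by
  have : cyl S A = ⋂ z ∈ (S : Set (Option (Fin d → ℤ))), (fun ω : Env d => ω z) ⁻¹' A z := by
    ext ω; simp [cyl]
  rw [this]
  exact MeasurableSet.biInter S.countable_toSet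
    (fun z _ => measurable_pi_apply z (arrow_measurableSet _))

def Cyl : Set (Set (Env d)) :=
  {s | ∃ S A, s = cyl (d := d) S A}

lemma isPiSystem_Cyl : IsPiSystem (Cyl (d := d)) := by
  rintro s ⟨S₁, A₁, rfl⟩ t ⟨S₂, A₂, rfl⟩ -
  refine ⟨S₁ ∪ S₂, fun z =>
    (if z ∈ S₁ then A₁ z else Set.univ) ∩ (if z ∈ S₂ then A₂ z else Set.univ), ?_⟩
  ext ω
  simp only [Set.mem_inter_iff, cyl, Set.mem_setOf_eq, Finset.mem_union, Set.mem_inter_iff]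
  constructor
  · rintro ⟨h1, h2⟩ z hz
    constructor
    · split_ifs with h; exacts [h1 z h, Set.mem_univ _]
    · split_ifs with h; exacts [h2 z h, Set.mem_univ _]
  · intro h
    constructor
    · intro z hz
      have := (h z (Or.inl hz)).1
      rwa [if_pos hz] at this
    · intro z hz
      have := (h z (Or.inr hz)).2
      rwa [if_pos hz] at this

lemma generateFrom_Cyl :
    (inferInstance : MeasurableSpace (Env d)) = MeasurableSpace.generateFrom (Cyl (d := d)) := by
  apply le_antisymm
  · show MeasurableSpace.pi ≤ _
    refine iSup_le fun z => ?_
    rw [← measurable_iff_comap_le]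
    intro A hA
    apply MeasurableSpace.measurableSet_generateFrom
    refine ⟨{z}, fun _ => A, ?_⟩
    ext ω; simp [cyl]
  · exact MeasurableSpace.generateFrom_le (by rintro s ⟨S, A, rfl⟩; exact cyl_measurableSet S A)

/-- For a countable space with measurable singletons, a measure is the sum of its
restrictions to singletons. -/
lemma measure_eq_tsum_singleton (μ : Measure (ArrowSet d)) (t : Set (ArrowSet d)) :
    ∑' e : ArrowSet d, μ (t ∩ {e}) = μ t := by
  have h : t = ⋃ e : ArrowSet d, t ∩ {e} := by
    ext x; simp
  conv_rhs => rw [h]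
  rw [measure_iUnion]
  · intro a b hab
    simp only [Function.onFun, Set.disjoint_left]
    rintro x ⟨-, rfl⟩ ⟨-, h2⟩
    exact hab h2
  · intro e; exact arrow_measurableSet _

lemma muP_univ {p : Fin d → ℝ} (hp0 : ∀ i, 0 ≤ p i) (hpsum : ∑ i, p i = 1) :
    muP p Set.univ = 1 := by
  rw [muP, Measure.finset_sum_apply]
  have : ∀ i : Fin d, (ENNReal.ofReal (p i / 2) •
      (Measure.dirac (arrowPos d i) + Measure.dirac (arrowNeg d i))) Set.univ
      = ENNReal.ofReal (p i) := by
    intro i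
    rw [Measure.smul_apply, Measure.add_apply, Measure.dirac_apply_of_mem (Set.mem_univ _),
      Measure.dirac_apply_of_mem (Set.mem_univ _), smul_eq_mul]
    rw [show (1 + 1 : ENNReal) = ((2 : ℝ).toNNReal : ENNReal) by
      norm_num]
    rw [← ENNReal.ofReal, ← ENNReal.ofReal_mul (div_nonneg (hp0 i) (by norm_num))]
    norm_num
  simp only [this]
  rw [← ENNReal.ofReal_sum_of_nonneg (fun i _ => hp0 i), hpsum, ENNReal.ofReal_one]

variable {p : Fin d → ℝ} {π : Measure (Env d)}

/-- Total mass of a product measure is 1. -/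
lemma pi_univ (hπ : IsProductMeasure p π) : π Set.univ = 1 := by
  have := hπ ∅ (fun _ => Set.univ) (fun _ => MeasurableSet.univ)
  simpa using this

/-- `T = σ ∘ τ_⋆`. -/
def T (ω : Env d) : Env d := swapMap (tauStar ω)

/-- `Tinv = τ_⋆⁻¹ ∘ σ`. -/
def Tinv (ω : Env d) : Env d := tauStarInv (swapMap ω)

/-- Coordinate permutation implementing `T` on the fiber `{ω ⋆ = e}`. -/
def phi (e : ArrowSet d) : Option (Fin d → ℤ) → Option (Fin d → ℤ)
  | none => some e.val
  | some x => if x = 0 then none else some (x + e.val)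

def psi (e : ArrowSet d) : Option (Fin d → ℤ) → Option (Fin d → ℤ)
  | none => some 0
  | some y => if y = e.val then none else some (y - e.val)

lemma psi_phi (e : ArrowSet d) (z : Option (Fin d → ℤ)) : psi e (phi e z) = z := by
  match z with
  | none =>
    simp [phi, psi]
  | some x =>
    by_cases hx : x = 0
    · simp [phi, psi, hx]
    · have hne : x + e.val ≠ e.val := by
        intro h; exact hx (by linear_combination h)
      simp [phi, psi, hx, hne]

lemma phi_psi (e : ArrowSet d) (w : Option (Fin d → ℤ)) : phi e (psi e w) = w := by
  match w with
  | none => simp [phi, psi]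
  | some y =>
    by_cases hy : y = e.val
    · simp [phi, psi, hy]
    · have hne : y - e.val ≠ 0 := sub_ne_zero.mpr hy
      simp [phi, psi, hy, hne]

lemma phi_injective (e : ArrowSet d) : Function.Injective (phi e) :=
  Function.LeftInverse.injective (psi_phi e)

lemma phi_eq_none_iff (e : ArrowSet d) (z : Option (Fin d → ℤ)) :
    phi e z = none ↔ z = some 0 := by
  constructor
  · intro h
    have := psi_phi e z
    rw [h] at this
    simp [psi] at this
    exact this.symm
  · rintro rfl; simp [phi]

lemma T_apply (ω : Env d) (z : Option (Fin d → ℤ)) :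
    T ω z = ω (phi (ω none) z) := by
  match z with
  | none => simp [T, swapMap, tauStar, phi]
  | some x =>
    by_cases hx : x = 0
    · simp [T, swapMap, tauStar, phi, hx]
    · simp [T, swapMap, tauStar, phi, hx]

lemma Tinv_T (ω : Env d) : Tinv (T ω) = ω := by
  funext z
  have hnone : T ω none = ω (some (0 + (ω none).val)) := rfl
  match z with
  | none =>
    show tauStarInv (swapMap (T ω)) none = ω none
    simp [tauStarInv, swapMap, T, tauStar]
  | some x =>
    show swapMap (T ω) (some (x - (swapMap (T ω) none).val)) = ω (some x)
    have h1 : swapMap (T ω) none = ω none := by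
      simp [swapMap, T, tauStar]
    rw [h1]
    by_cases hx : x - (ω none).val = 0
    · have hx' : x = (ω none).val := by linear_combination hx
      simp [swapMap, T, tauStar, hx, hx']
    · have hx2 : x - (ω none).val + (ω none).val = x := by ring
      simp [swapMap, T, tauStar, hx, hx2]

lemma measurable_T : Measurable (T (d := d)) :=
  measurable_swapMap.comp measurable_tauStar

lemma measurable_Tinv : Measurable (Tinv (d := d)) :=
  measurable_tauStarInv.comp measurable_swapMap

/-- The key invariance: the pushforward of `π` by `T` is again a product measure,
hence equals `π`. -/
lemma map_T_eq (hp0 : ∀ i, 0 ≤ p i) (hpsum : ∑ i, p i = 1)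
    (hπ : IsProductMeasure p π) : π.map (T (d := d)) = π := by
  have hfin : IsFiniteMeasure π := ⟨by rw [pi_univ hπ]; exact ENNReal.one_lt_top⟩
  have hπ' : ∀ S A, (∀ z, MeasurableSet (A z)) → π (cyl (d := d) S A) = ∏ z ∈ S, muP p (A z) :=
    fun S A hA => hπ S A hA
  refine ext_of_generate_finite (Cyl (d := d)) generateFrom_Cyl isPiSystem_Cyl ?_ ?_
  · rintro s ⟨S, A, rfl⟩
    rw [Measure.map_apply measurable_T (cyl_measurableSet S A),
      hπ' S A (fun z => arrow_measurableSet _)]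
    -- decompose the preimage along the value at ⋆
    classical
    set A₀ : Set (ArrowSet d) := if some 0 ∈ S then A (some 0) else Set.univ with hA₀
    have hpre : T ⁻¹' (cyl S A) = ⋃ e : ArrowSet d,
        cyl (insert none (S.image (phi e)))
          (fun w => (if w = none then ({e} : Set (ArrowSet d)) else Set.univ) ∩
            (if psi e w ∈ S then A (psi e w) else Set.univ)) := by
      ext ω
      simp only [Set.mem_preimage, Set.mem_iUnion]
      constructor
      · intro h
        refine ⟨ω none, ?_⟩
        intro w hw
        constructor
        · split_ifs with h1
          · subst h1
            exact rfl
          · exact Set.mem_univ _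
        · split_ifs with h2
          · have := h (psi (ω none) w) h2
            rwa [T_apply, phi_psi] at this
          · exact Set.mem_univ _
      · rintro ⟨e, he⟩
        have hnone : ω none = e := by
          have := (he none (Finset.mem_insert_self _ _)).1
          rwa [if_pos rfl, Set.mem_singleton_iff] at this
        intro z hz
        have hmem : phi e z ∈ insert none (S.image (phi e)) := by
          by_cases h : phi e z = none
          · rw [h]; exact Finset.mem_insert_self _ _
          · exact Finset.mem_insert_of_mem (Finset.mem_image_of_mem _ hz)
        have := (he (phi e z) hmem).2
        rw [psi_phi] at this
        rw [if_pos hz] at this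
        rwa [T_apply, hnone]
    rw [hpre]
    have hdisj : Pairwise (Function.onFun Disjoint fun e : ArrowSet d =>
        cyl (insert none (S.image (phi e)))
          (fun w => (if w = none then ({e} : Set (ArrowSet d)) else Set.univ) ∩
            (if psi e w ∈ S then A (psi e w) else Set.univ))) := by
      intro a b hab
      simp only [Function.onFun, Set.disjoint_left]
      intro ω ha hb
      have h1 := (ha none (Finset.mem_insert_self _ _)).1
      have h2 := (hb none (Finset.mem_insert_self _ _)).1
      rw [if_pos rfl, Set.mem_singleton_iff] at h1 h2
      exact hab (h1 ▸ h2)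
    rw [measure_iUnion hdisj (fun e => cyl_measurableSet _ _)]
    -- compute each term
    have hterm : ∀ e : ArrowSet d,
        π (cyl (insert none (S.image (phi e)))
          (fun w => (if w = none then ({e} : Set (ArrowSet d)) else Set.univ) ∩
            (if psi e w ∈ S then A (psi e w) else Set.univ)))
        = muP p ({e} ∩ A₀) * ∏ z ∈ S.erase (some 0), muP p (A z) := by
      intro e
      rw [hπ' _ _ (fun z => arrow_measurableSet _)]
      rw [← Finset.mul_prod_erase _ _ (Finset.mem_insert_self none (S.image (phi e)))]
      congr 1
      rw [Finset.erase_insert_eq_erase]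
      have h0 : phi e (some 0) = none := by simp [phi]
      simp only [← h0]
      rw [← Finset.image_erase (phi_injective e)]
      rw [Finset.prod_image (fun a _ b _ h => phi_injective e h)]
      apply Finset.prod_congr rfl
      intro z hz
      have hz0 : z ≠ some 0 := Finset.ne_of_mem_erase hz
      have hzS : z ∈ S := Finset.mem_of_mem_erase hz
      rw [if_neg (show phi e z ≠ phi e (some 0) from fun h => hz0 (phi_injective e h)),
        psi_phi, if_pos hzS, Set.univ_inter]
    simp only [hterm]
    rw [ENNReal.tsum_mul_right]
    have hsum : (∑' e : ArrowSet d, muP p ({e} ∩ A₀)) = muP p A₀ := by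
      simp_rw [Set.inter_comm]
      exact measure_eq_tsum_singleton (muP p) A₀
    rw [hsum]
    by_cases h0 : some 0 ∈ S
    · rw [hA₀, if_pos h0]
      exact Finset.mul_prod_erase S (fun z => muP p (A z)) h0
    · rw [hA₀, if_neg h0, muP_univ hp0 hpsum, one_mul, Finset.erase_eq_of_notMem h0]
  · rw [Measure.map_apply measurable_T MeasurableSet.univ]
    simp

end AdjointAux

/-- Adjoint identity: for every `p ∈ 𝒫` and all bounded measurable `f, g : Ω → ℝ`,
`∫ f(σ(τ_⋆ω)) g(ω) dπ_p(ω) = ∫ f(ω) g(τ_⋆⁻¹(σω)) dπ_p(ω)`; i.e. the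
`L²(π_p)`-adjoint of `f ↦ f ∘ (σ ∘ τ_⋆)` is `g ↦ g ∘ (τ_⋆⁻¹ ∘ σ)`. -/


theorem adjoint_identity (d : ℕ) (hd : 0 < d)
    (p : Fin d → ℝ) (hp0 : ∀ i, 0 ≤ p i) (hp1 : ∀ i, p i ≤ 1)
    (hpsum : ∑ i, p i = 1)
    (π : Measure (Env d)) (hπ : IsProductMeasure p π)
    (f g : Env d → ℝ) (hf : Measurable f) (hg : Measurable g)
    (hfb : ∃ C : ℝ, ∀ ω, |f ω| ≤ C) (hgb : ∃ C : ℝ, ∀ ω, |g ω| ≤ C) :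
    ∫ ω, f (swapMap (tauStar ω)) * g ω ∂π
      = ∫ ω, f ω * g (tauStarInv (swapMap ω)) ∂π := by
  have hmap := AdjointAux.map_T_eq hp0 hpsum hπ
  have hmeas : Measurable (fun ω : Env d => f ω * g (AdjointAux.Tinv ω)) :=
    hf.mul (hg.comp AdjointAux.measurable_Tinv)
  calc ∫ ω, f (swapMap (tauStar ω)) * g ω ∂π
      = ∫ ω, (fun ω : Env d => f ω * g (AdjointAux.Tinv ω)) (AdjointAux.T ω) ∂π := by
        refine integral_congr_ae (Filter.Eventually.of_forall fun ω => ?_)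
        show f (swapMap (tauStar ω)) * g ω
            = f (AdjointAux.T ω) * g (AdjointAux.Tinv (AdjointAux.T ω))
        rw [AdjointAux.Tinv_T]
        rfl
    _ = ∫ ω, f ω * g (AdjointAux.Tinv ω) ∂(π.map AdjointAux.T) :=
        (integral_map AdjointAux.measurable_T.aemeasurable
          hmeas.aestronglyMeasurable).symm
    _ = ∫ ω, f ω * g (tauStarInv (swapMap ω)) ∂π := by rw [hmap]; rfl

end
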